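/- arXiv:2012.05004 — 2 statements merged into one kernel-verified Lean document; each statement's English description precedes it below -/
import Mathlib

section
/- Let R be a commutative ring equipped with a star operation (StarRing R), F an m×p matrix, H a p×m matrix, and Φv an m×m matrix over R. Suppose I − F·H is invertible with inverse P and I − H·F is invertible with inverse Q, set Φ₁₁ = P·Φv·Pᴴ and Φ₂₁ = Q·H·Φv·Pᴴ (the blocks obtained when the input-noise spectrum Φr is zero), and suppose Φ₁₁ is invertible. Then H = Φ₂₁·Φ₁₁⁻¹. -/
/-! The push-through identity `(1 - H F)⁻¹ H = H (1 - F H)⁻¹` turns `Φ₂₁ = Q H Φv Pᴴ` into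
`H P Φv Pᴴ = H Φ₁₁`; cancel the invertible `Φ₁₁`. -/

open Matrix

namespace Matrix

variable {m p R : Type*} [Fintype m] [Fintype p] [DecidableEq m] [DecidableEq p] [Ring R]

theorem mul_one_sub_mul_eq_one_sub_mul_mul (F : Matrix m p R) (H : Matrix p m R) :
    H * (1 - F * H) = (1 - H * F) * H := by
  simp only [Matrix.mul_sub, Matrix.sub_mul, Matrix.mul_one, Matrix.one_mul, Matrix.mul_assoc]

theorem push_through {F : Matrix m p R} {H : Matrix p m R} {P : Matrix m m R} {Q : Matrix p p R}
    (hP : (1 - F * H) * P = 1) (hQ : Q * (1 - H * F) = 1) : Q * H = H * P :=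
  calc Q * H = Q * (H * ((1 - F * H) * P)) := by rw [hP, Matrix.mul_one]
    _ = Q * (1 - H * F) * (H * P) := by
      rw [← Matrix.mul_assoc H, mul_one_sub_mul_eq_one_sub_mul_mul, Matrix.mul_assoc,
        Matrix.mul_assoc]
    _ = H * P := by rw [hQ, Matrix.one_mul]

end Matrix

theorem H_eq_phi21_mul_phi11_inv_general {R : Type*} [CommRing R] [StarRing R] {m p : ℕ}
    (F : Matrix (Fin m) (Fin p) R) (H : Matrix (Fin p) (Fin m) R)
    (Φv : Matrix (Fin m) (Fin m) R)
    (P : Matrix (Fin m) (Fin m) R) (Q : Matrix (Fin p) (Fin p) R)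
    (hP₁ : (1 - F * H) * P = 1)
    (hQ₂ : Q * (1 - H * F) = 1)
    (Φ₁₁ : Matrix (Fin m) (Fin m) R) (Φ₂₁ : Matrix (Fin p) (Fin m) R)
    (hΦ₁₁ : Φ₁₁ = P * Φv * Pᴴ)
    (hΦ₂₁ : Φ₂₁ = Q * H * Φv * Pᴴ)
    (hunit : IsUnit Φ₁₁) :
    H = Φ₂₁ * Φ₁₁⁻¹ := by
  have h21 : Φ₂₁ = H * Φ₁₁ := by
    rw [hΦ₂₁, hΦ₁₁, push_through hP₁ hQ₂]
    simp only [Matrix.mul_assoc]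
  rw [h21, mul_nonsing_inv_cancel_right _ _ ((isUnit_iff_isUnit_det _).mp hunit)]

theorem H_eq_phi21_mul_phi11_inv {R : Type*} [CommRing R] [StarRing R] {m p : ℕ}
    (F : Matrix (Fin m) (Fin p) R) (H : Matrix (Fin p) (Fin m) R)
    (Φv : Matrix (Fin m) (Fin m) R)
    (P : Matrix (Fin m) (Fin m) R) (Q : Matrix (Fin p) (Fin p) R)
    (hP₁ : (1 - F * H) * P = 1) (hP₂ : P * (1 - F * H) = 1)
    (hQ₁ : (1 - H * F) * Q = 1) (hQ₂ : Q * (1 - H * F) = 1)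
    (Φ₁₁ : Matrix (Fin m) (Fin m) R) (Φ₂₁ : Matrix (Fin p) (Fin m) R)
    (hΦ₁₁ : Φ₁₁ = P * Φv * Pᴴ)
    (hΦ₂₁ : Φ₂₁ = Q * H * Φv * Pᴴ)
    (hunit : IsUnit Φ₁₁) :
    H = Φ₂₁ * Φ₁₁⁻¹ :=
  H_eq_phi21_mul_phi11_inv_general F H Φv P Q hP₁ hQ₂ Φ₁₁ Φ₂₁ hΦ₁₁ hΦ₂₁ hunit
end

section
/- Let K be a field, A a p×m matrix, B a p×p matrix, Φ₁₁ an invertible m×m matrix and Φ₂₁ a p×m matrix over K. Suppose the p×(m+p) matrix [A B] (columns of A followed by columns of B) has rank p, and suppose A·Φ₁₁ + B·Φ₂₁ = 0. Then B is invertible. -/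
/-! Since `Φ₁₁` is invertible, the annihilator relation gives `A = B * (-Φ₂₁ * Φ₁₁⁻¹)`, so every
column of `[A B]` lies in the column space of `B`; thus `rank B = rank [A B] = p`. -/

open Matrix

namespace Matrix

theorem isUnit_iff_rank_eq_card {K n : Type*} [Field K] [Fintype n] [DecidableEq n]
    (A : Matrix n n K) : IsUnit A ↔ A.rank = Fintype.card n := by
  rw [← linearIndependent_cols_iff_isUnit, linearIndependent_iff_card_eq_finrank_span,
    rank_eq_finrank_span_cols, eq_comm]
  rfl

theorem rank_fromCols_mul_left_eq {R m n o : Type*} [CommSemiring R] [StrongRankCondition R]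
    [Fintype n] [DecidableEq n] [Fintype o] (B : Matrix m n R) (X : Matrix n o R) :
    (fromCols (B * X) B).rank = B.rank := by
  apply le_antisymm
  · calc (fromCols (B * X) B).rank = (B * fromCols X 1).rank := by
          rw [mul_fromCols, Matrix.mul_one]
      _ ≤ B.rank := rank_mul_le_left _ _
  · exact rank_submatrix_le (fromCols (B * X) B) id Sum.inr

end Matrix

theorem isUnit_B_of_annihilator {K : Type*} [Field K] {m p : ℕ}
    (A : Matrix (Fin p) (Fin m) K) (B : Matrix (Fin p) (Fin p) K)
    (Φ₁₁ : Matrix (Fin m) (Fin m) K) (Φ₂₁ : Matrix (Fin p) (Fin m) K)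
    (hΦ₁₁ : IsUnit Φ₁₁)
    (hrank : (Matrix.fromCols A B).rank = p)
    (hann : A * Φ₁₁ + B * Φ₂₁ = 0) :
    IsUnit B := by
  have : Invertible Φ₁₁ := hΦ₁₁.invertible
  have hA : A = B * (-Φ₂₁ * Φ₁₁⁻¹) := by
    rw [← Matrix.mul_assoc, eq_comm, mul_inv_eq_iff_eq_mul_of_invertible, Matrix.mul_neg,
      neg_eq_of_add_eq_zero_left hann]
  rw [isUnit_iff_rank_eq_card, Fintype.card_fin]
  rwa [hA, rank_fromCols_mul_left_eq] at hrank
end
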